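/- Let R be a left Noetherian ring. Then R satisfies property (◇) if and only if for every left R-module A, the submodule A_t (the sum of all semi-Artinian submodules of A) is the unique maximal essential extension of soc(A) inside A; that is, soc(A) is an essential submodule of A_t, and every submodule B of A containing soc(A) in which soc(A) is essential satisfies B ⊆ A_t. -/

import Mathlib

universe u v w

/-- The socle of a module: the sum (supremum) of all simple submodules. -/
def moduleSocle (R : Type u) [Ring R] (M : Type v) [AddCommGroup M] [Module R M] :
    Submodule R M :=
  sSup {S : Submodule R M | IsSimpleModule R S}

/-- A submodule `N` of `M` is essential if `N ⊓ L ≠ ⊥` for every nonzero submodule `L` of `M`. -/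
def IsEssentialSubmodule {R : Type u} [Ring R] {M : Type v} [AddCommGroup M] [Module R M]
    (N : Submodule R M) : Prop :=
  ∀ L : Submodule R M, L ≠ ⊥ → N ⊓ L ≠ ⊥

/-- A module is semi-Artinian if every nonzero quotient has a nonzero socle. -/
def IsSemiartinianModule (R : Type u) [Ring R] (M : Type v) [AddCommGroup M] [Module R M] :
    Prop :=
  ∀ N : Submodule R M, N ≠ ⊤ → moduleSocle R (M ⧸ N) ≠ ⊥

/-- A module is singular if the annihilator of each of its elements is an essential left
ideal of `R`. -/
def IsSingularModule (R : Type u) [Ring R] (M : Type v) [AddCommGroup M] [Module R M] : Prop :=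
  ∀ m : M, IsEssentialSubmodule (LinearMap.ker (LinearMap.toSpanSingleton R M m))

/-- Property (◇): every finitely generated left `R`-module containing an essential simple
submodule is Artinian. -/
def HasPropertyDiamond (R : Type u) [Ring R] : Prop :=
  ∀ (M : Type v) [AddCommGroup M] [Module R M], Module.Finite R M →
    (∃ S : Submodule R M, IsSimpleModule R S ∧ IsEssentialSubmodule S) → IsArtinian R M

/-- A left C-ring: every nonzero cyclic singular left module has a nonzero socle. -/
def IsLeftCRing (R : Type u) [Ring R] : Prop :=
  ∀ (M : Type v) [AddCommGroup M] [Module R M], Nontrivial M →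
    (∃ m : M, Submodule.span R {m} = ⊤) → IsSingularModule R M →
    moduleSocle R M ≠ ⊥

/-- The Dickson torsion part of a module: the sum of all its semi-Artinian submodules. -/
def dicksonTorsionPart (R : Type u) [Ring R] (A : Type v) [AddCommGroup A] [Module R A] :
    Submodule R A :=
  sSup {N : Submodule R A | IsSemiartinianModule R N}

/-!
Both directions rest on maximal complements: if `D` is maximal among submodules disjoint from `L`,
the image of `L` in `M ⧸ D` is essential. For simple `L` this feeds (◇), which makes every cyclic
submodule in which `soc(A)` is essential Artinian, hence semi-Artinian, hence contained in `A_t`;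
for arbitrary `L` it shows that `soc(A)` is essential in the semi-Artinian module `A_t`.
Conversely, a finitely generated module with an essential simple submodule has essential socle, so
it is its own Dickson torsion part, and a Noetherian semi-Artinian module is Artinian.
-/

open Submodule

theorem exists_maximal_disjoint {α : Type*} [CompleteLattice α] [IsCompactlyGenerated α] (a : α) :
    ∃ b, Maximal (Disjoint · a) b :=
  zorn_le₀ {b | Disjoint b a} fun c hc hchain =>
    ⟨sSup c, hchain.directedOn.disjoint_sSup_left.2 fun _ hb => hc hb, fun _ hb => le_sSup hb⟩

section Modules

variable {R : Type u} [Ring R] {M : Type*} [AddCommGroup M] [Module R M]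
  {W : Type*} [AddCommGroup W] [Module R W]

theorem moduleSocle_ne_bot_iff :
    moduleSocle R M ≠ ⊥ ↔ ∃ S : Submodule R M, IsSimpleModule R S := by
  rw [ne_eq, moduleSocle, sSup_eq_bot]
  push Not
  exact ⟨fun ⟨S, hS, _⟩ => ⟨S, hS⟩,
    fun ⟨S, hS⟩ => ⟨S, hS, (isSimpleModule_iff_isAtom.mp hS).ne_bot⟩⟩

theorem isSemisimpleModule_moduleSocle : IsSemisimpleModule R (moduleSocle R M) := by
  rw [moduleSocle, sSup_eq_iSup]
  exact isSemisimpleModule_biSup_of_isSemisimpleModule_submodule (p := id)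
    fun S (hS : IsSimpleModule R S) => show IsSemisimpleModule R S from inferInstance

theorem exists_isSimpleModule_of_injective {f : M →ₗ[R] W} (hf : Function.Injective f) :
    (∃ S : Submodule R M, IsSimpleModule R S) → ∃ T : Submodule R W, IsSimpleModule R T
  | ⟨S, _⟩ => ⟨S.map f, .congr (S.equivMapOfInjective f hf).symm⟩

namespace Submodule

theorem injective_mkQ_comp_subtype {Q L : Submodule R M} (h : Disjoint Q L) :
    Function.Injective (Q.mkQ ∘ₗ L.subtype) := by
  rw [← LinearMap.ker_eq_bot, LinearMap.ker_comp, ker_mkQ, ← disjoint_iff_comap_eq_bot]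
  exact h.symm

theorem isSimpleModule_map_mkQ {Q S : Submodule R M} (h : Disjoint Q S) [IsSimpleModule R S] :
    IsSimpleModule R (S.map Q.mkQ) := by
  have e := LinearEquiv.ofInjective _ (injective_mkQ_comp_subtype h)
  rw [LinearMap.range_comp, range_subtype] at e
  exact .congr e.symm

theorem isEssentialSubmodule_map_mkQ {Q L : Submodule R M} (hQ : Maximal (Disjoint · L) Q) :
    IsEssentialSubmodule (L.map Q.mkQ) := by
  intro K hK hLK
  have hQK : Q ≤ K.comap Q.mkQ := fun x hx => by
    rw [mem_comap, mkQ_apply, (Quotient.mk_eq_zero Q).mpr hx]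
    exact K.zero_mem
  have hdisj : Disjoint (K.comap Q.mkQ) L := by
    refine disjoint_def.mpr fun x hxK hxL => disjoint_def.mp hQ.1 x ?_ hxL
    have hx : Q.mkQ x ∈ L.map Q.mkQ ⊓ K := ⟨mem_map_of_mem hxL, hxK⟩
    rwa [hLK, mem_bot, mkQ_apply, Quotient.mk_eq_zero] at hx
  refine hK (eq_bot_iff.mpr fun y hy => ?_)
  obtain ⟨x, rfl⟩ := Q.mkQ_surjective y
  exact (Quotient.mk_eq_zero Q).mpr (hQ.2 hdisj hQK hy)

end Submodule

namespace IsSemiartinianModule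

theorem of_isArtinian [IsArtinian R M] : IsSemiartinianModule R M := by
  intro N hN
  have : Nontrivial (M ⧸ N) := Quotient.nontrivial_iff.mpr hN
  have : IsAtomic (Submodule R (M ⧸ N)) := isAtomic_of_orderBot_wellFounded_lt IsWellFounded.wf
  obtain ⟨T, hT⟩ := IsAtomic.exists_atom (Submodule R (M ⧸ N))
  exact moduleSocle_ne_bot_iff.mpr ⟨T, isSimpleModule_iff_isAtom.mpr hT⟩

theorem exists_isSimpleModule_of_ne_zero (hM : IsSemiartinianModule R M) {f : M →ₗ[R] W}
    (hf : f ≠ 0) : ∃ T : Submodule R W, IsSimpleModule R T := by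
  have hker : LinearMap.ker f ≠ ⊤ := by rwa [ne_eq, LinearMap.ker_eq_top]
  exact exists_isSimpleModule_of_injective
    (f := (LinearMap.range f).subtype ∘ₗ f.quotKerEquivRange.toLinearMap)
    ((LinearMap.range f).injective_subtype.comp f.quotKerEquivRange.injective)
    (moduleSocle_ne_bot_iff.mp (hM _ hker))

/-- A simple submodule of `M ⧸ Q`, for `Q` a maximal complement of `L`, lies in the essential
image of `L`, and so pulls back to a simple submodule of `L`. -/
theorem exists_isSimpleModule_le (hM : IsSemiartinianModule R M) {L : Submodule R M}
    (hL : L ≠ ⊥) : ∃ S ≤ L, IsSimpleModule R S := by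
  obtain ⟨Q, hQ⟩ := exists_maximal_disjoint L
  have hQ_ne_top : Q ≠ ⊤ := by
    rintro rfl
    exact hL (top_disjoint.mp hQ.1)
  obtain ⟨T, hT⟩ := moduleSocle_ne_bot_iff.mp (hM Q hQ_ne_top)
  have hinj := injective_mkQ_comp_subtype hQ.1
  have hT_le : T ≤ LinearMap.range (Q.mkQ ∘ₗ L.subtype) := by
    rw [LinearMap.range_comp, range_subtype]
    refine (isSimpleModule_iff_isAtom.mp hT).not_disjoint_iff_le.mp fun h => ?_
    exact isEssentialSubmodule_map_mkQ hQ T (isSimpleModule_iff_isAtom.mp hT).ne_bot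
      (disjoint_iff.mp h.symm)
  have : IsSimpleModule R (T.comap (Q.mkQ ∘ₗ L.subtype)) :=
    .congr (comap_equiv_self_of_inj_of_le hinj hT_le)
  exact ⟨(T.comap (Q.mkQ ∘ₗ L.subtype)).map L.subtype, map_subtype_le L _,
    .congr (equivMapOfInjective L.subtype L.injective_subtype _).symm⟩

theorem isArtinian [IsNoetherian R M] (hM : IsSemiartinianModule R M) : IsArtinian R M := by
  suffices ∀ N : Submodule R M, IsArtinian R (M ⧸ N) from
    isArtinian_of_linearEquiv (quotEquivOfEqBot ⊥ rfl)
  intro N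
  induction N using WellFoundedGT.induction with
  | _ N ih =>
  by_cases hN : N = ⊤
  · subst hN
    infer_instance
  obtain ⟨T, hT⟩ := moduleSocle_ne_bot_iff.mp (hM N hN)
  have hlt : N < T.comap N.mkQ := by
    simpa using (comap_lt_comap_iff_of_surjective N.mkQ_surjective).mpr
      (isSimpleModule_iff_isAtom.mp hT).bot_lt
  have := ih _ hlt
  have e := quotientQuotientEquivQuotient N _ hlt.le
  rw [map_comap_eq_of_surjective N.mkQ_surjective] at e
  exact (isArtinian_iff_submodule_quotient T).mpr ⟨inferInstance, isArtinian_of_linearEquiv e.symm⟩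

end IsSemiartinianModule

theorem isSemiartinianModule_sSup {s : Set (Submodule R M)}
    (hs : ∀ N ∈ s, IsSemiartinianModule R N) : IsSemiartinianModule R ↥(sSup s) := by
  intro Q hQ
  have : ¬sSup s ≤ Q.map (sSup s).subtype := fun h => hQ <| top_le_iff.mp <|
    (map_le_map_iff_of_injective (injective_subtype _) ⊤ Q).mp (by rwa [map_subtype_top])
  obtain ⟨N, hN, hNQ⟩ : ∃ N ∈ s, ¬N ≤ Q.map (sSup s).subtype := by simpa [sSup_le_iff] using this
  refine moduleSocle_ne_bot_iff.mpr ((hs N hN).exists_isSimpleModule_of_ne_zero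
    (f := Q.mkQ ∘ₗ inclusion (le_sSup hN)) fun h => hNQ fun x hx => ?_)
  exact ⟨_, (Quotient.mk_eq_zero Q).mp (LinearMap.congr_fun h ⟨x, hx⟩), rfl⟩

theorem isSemiartinianModule_dicksonTorsionPart :
    IsSemiartinianModule R (dicksonTorsionPart R M) :=
  isSemiartinianModule_sSup fun _ hN => hN

theorem moduleSocle_le_dicksonTorsionPart : moduleSocle R M ≤ dicksonTorsionPart R M :=
  sSup_le_sSup fun _ (_ : IsSimpleModule R _) => IsSemiartinianModule.of_isArtinian

theorem moduleSocle_inf_ne_bot_of_le_dicksonTorsionPart {L : Submodule R M}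
    (hL : L ≤ dicksonTorsionPart R M) (hL0 : L ≠ ⊥) : moduleSocle R M ⊓ L ≠ ⊥ := by
  set T := dicksonTorsionPart R M
  have hLT : L.comap T.subtype ≠ ⊥ := by
    rwa [ne_eq, ← disjoint_iff_comap_eq_bot, disjoint_iff, inf_eq_right.mpr hL]
  obtain ⟨S, hSL, hS⟩ := isSemiartinianModule_dicksonTorsionPart.exists_isSimpleModule_le hLT
  have hS' : IsSimpleModule R (S.map T.subtype) :=
    .congr (equivMapOfInjective T.subtype T.injective_subtype S).symm
  refine fun h => (isSimpleModule_iff_isAtom.mp hS').ne_bot (eq_bot_iff.mpr ?_)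
  exact h ▸ le_inf (le_sSup hS') (map_le_iff_le_comap.mpr hSL)

end Modules

section Diamond

variable {R : Type u} [Ring R] {A : Type v} [AddCommGroup A] [Module R A]

/-- Induction on `N ⊓ C`, which is well founded as `N` is Artinian: for a simple `S ≤ N ⊓ C` and a
maximal complement `D` of `S` in `C`, property (◇) makes `C ⧸ D` Artinian, while `N ⊓ D < N ⊓ C`. -/
theorem HasPropertyDiamond.isArtinian_of_essential (hd : HasPropertyDiamond.{u, v} R)
    (N : Submodule R A) [IsArtinian R N] (C : Submodule R A) [IsNoetherian R C]
    (hC : ∀ L ≤ C, L ≠ ⊥ → N ⊓ L ≠ ⊥) : IsArtinian R C := by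
  obtain ⟨K, hK⟩ : ∃ K, C.comap N.subtype = K := ⟨_, rfl⟩
  induction K using WellFoundedLT.induction generalizing C with
  | _ K ih =>
  by_cases hC0 : C = ⊥
  · subst hC0
    infer_instance
  have hK0 : K ≠ ⊥ := by
    rw [← hK, ne_eq, ← disjoint_iff_comap_eq_bot, disjoint_iff]
    exact hC C le_rfl hC0
  obtain ⟨S₀, hS₀K, hS₀⟩ := IsSemiartinianModule.of_isArtinian.exists_isSimpleModule_le hK0
  have hSC : S₀.map N.subtype ≤ C := map_le_iff_le_comap.mpr (hK ▸ hS₀K)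
  set S := (S₀.map N.subtype).comap C.subtype
  have hS : IsSimpleModule R S :=
    .congr ((comapSubtypeEquivOfLe hSC).trans (equivMapOfInjective _ N.injective_subtype S₀).symm)
  obtain ⟨D, hD⟩ := exists_maximal_disjoint S
  have hquot : IsArtinian R (C ⧸ D) :=
    hd _ inferInstance ⟨_, isSimpleModule_map_mkQ hD.1, isEssentialSubmodule_map_mkQ hD⟩
  have : IsNoetherian R (D.map C.subtype) := isNoetherian_of_le (map_subtype_le C D)
  have hlt : (D.map C.subtype).comap N.subtype < K := by
    refine hK ▸ lt_of_le_of_ne (comap_mono (map_subtype_le C D)) fun h => ?_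
    have hSD : S ≤ D := by
      rw [← comap_map_eq_of_injective C.injective_subtype D]
      exact comap_mono (map_le_iff_le_comap.mpr (h ▸ hK ▸ hS₀K))
    exact (isSimpleModule_iff_isAtom.mp hS).ne_bot (hD.1.symm.eq_bot_of_le hSD)
  have : IsArtinian R (D.map C.subtype) :=
    ih _ hlt _ (fun L hL => hC L (hL.trans (map_subtype_le C D))) rfl
  have : IsArtinian R D :=
    isArtinian_of_linearEquiv (equivMapOfInjective _ C.injective_subtype D).symm
  exact (isArtinian_iff_submodule_quotient D).mpr ⟨inferInstance, hquot⟩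

theorem HasPropertyDiamond.le_dicksonTorsionPart [IsNoetherianRing R]
    (hd : HasPropertyDiamond.{u, v} R) {B : Submodule R A}
    (hB : ∀ L ≤ B, L ≠ ⊥ → moduleSocle R A ⊓ L ≠ ⊥) : B ≤ dicksonTorsionPart R A := by
  intro x hx
  have hxB : R ∙ x ≤ B := (span_singleton_le_iff_mem x B).mpr hx
  have : IsNoetherian R (R ∙ x) := isNoetherian_of_isNoetherianRing_of_finite R _
  have : IsNoetherian R ↥(moduleSocle R A ⊓ R ∙ x) := isNoetherian_of_le inf_le_right
  have := isSemisimpleModule_moduleSocle (R := R) (M := A)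
  have : IsSemisimpleModule R ↥(moduleSocle R A ⊓ R ∙ x) :=
    .of_injective (inclusion inf_le_left) (inclusion_injective inf_le_left)
  have : IsArtinian R (R ∙ x) := hd.isArtinian_of_essential _ _ fun L hL hL0 => by
    rw [inf_assoc, inf_eq_right.mpr hL]
    exact hB L (hL.trans hxB) hL0
  exact le_sSup (s := {N : Submodule R A | IsSemiartinianModule R N}) (a := R ∙ x)
    IsSemiartinianModule.of_isArtinian (mem_span_singleton_self x)

end Diamond

/-- For a left Noetherian ring, property (◇) holds iff for every module `A`, the Dickson
torsion part of `A` is the unique maximal essential extension of `soc(A)` inside `A`. -/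
theorem stmt7 (R : Type u) [Ring R] [IsNoetherianRing R] :
    HasPropertyDiamond.{u, v} R ↔
      ∀ (A : Type v) [AddCommGroup A] [Module R A],
        (moduleSocle R A ≤ dicksonTorsionPart R A ∧
          ∀ L : Submodule R A, L ≤ dicksonTorsionPart R A → L ≠ ⊥ →
            moduleSocle R A ⊓ L ≠ ⊥) ∧
        ∀ B : Submodule R A, moduleSocle R A ≤ B →
          (∀ L : Submodule R A, L ≤ B → L ≠ ⊥ → moduleSocle R A ⊓ L ≠ ⊥) →
          B ≤ dicksonTorsionPart R A := by
  constructor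
  · intro hd A _ _
    exact ⟨⟨moduleSocle_le_dicksonTorsionPart,
      fun _ => moduleSocle_inf_ne_bot_of_le_dicksonTorsionPart⟩,
      fun _ _ => hd.le_dicksonTorsionPart⟩
  rintro h M _ _ _ ⟨S, hS, hSess⟩
  have : IsNoetherian R M := isNoetherian_of_isNoetherianRing_of_finite R M
  have htop : dicksonTorsionPart R M = ⊤ := top_le_iff.mp <| (h M).2 ⊤ le_top fun L _ hL h0 =>
    hSess L hL (eq_bot_iff.mpr (h0 ▸ inf_le_inf_right L (le_sSup hS)))
  have : IsArtinian R (dicksonTorsionPart R M) :=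
    isSemiartinianModule_dicksonTorsionPart.isArtinian
  rw [htop] at this
  exact isArtinian_of_linearEquiv topEquiv
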